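/- Strict tightening of the upper bound: if i₀ ∉ A, w' i₀ > 0, and ∑ j, τ i₀ j * w j < C, then u(A ∪ {i₀}) < u(A). -/

import Mathlib

open Finset

lemma sum_compl_insert_add_sum_insert_lt {ι M : Type*} [Fintype ι] [DecidableEq ι]
    [AddCommMonoid M] [PartialOrder M] [IsOrderedCancelAddMonoid M]
    (f g : ι → M) {s : Finset ι} {i : ι} (hi : i ∉ s) (hfg : f i < g i) :
    ∑ x ∈ (insert i s)ᶜ, g x + ∑ x ∈ insert i s, f x < ∑ x ∈ sᶜ, g x + ∑ x ∈ s, f x := by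
  rw [compl_insert, sum_insert hi, ← add_sum_erase sᶜ g (mem_compl.mpr hi)]
  calc ∑ x ∈ sᶜ.erase i, g x + (f i + ∑ x ∈ s, f x)
      = f i + (∑ x ∈ sᶜ.erase i, g x + ∑ x ∈ s, f x) := by abel
    _ < g i + (∑ x ∈ sᶜ.erase i, g x + ∑ x ∈ s, f x) := add_lt_add_left hfg _
    _ = g i + ∑ x ∈ sᶜ.erase i, g x + ∑ x ∈ s, f x := (add_assoc _ _ _).symm

lemma sum_mul_pos_of_pos_of_sum_pos {ι : Type*} {s : Finset ι} {a w : ι → ℝ}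
    (ha : ∀ j ∈ s, 0 < a j) (hw : ∀ j ∈ s, 0 ≤ w j) (hsum : 0 < ∑ j ∈ s, w j) :
    0 < ∑ j ∈ s, a j * w j := by
  obtain ⟨j, hj, hwj⟩ := exists_lt_of_sum_lt (f := fun _ => (0 : ℝ)) (by simpa using hsum)
  exact sum_pos' (fun k hk => mul_nonneg (ha k hk).le (hw k hk)) ⟨j, hj, mul_pos (ha j hj) hwj⟩

theorem simplification_upper_bound_strict_tightening_general
    (m : ℕ) (C : ℝ)
    (w w' ζ : Fin m → ℝ) (τ : Fin m → Fin m → ℝ)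
    (hw : ∀ j, 0 ≤ w j)
    (hwsum : ∑ j, w j = 1)
    (hζ : ∀ i, 0 < ζ i)
    (hτ : ∀ i j, 0 < τ i j)
    (A : Finset (Fin m)) (i₀ : Fin m) (hi₀ : i₀ ∉ A)
    (hwi₀ : 0 < w' i₀) (hlt : ∑ j, τ i₀ j * w j < C) :
    -Real.log (∑ i, ζ i * w i)
      + ∑ i ∈ (A ∪ {i₀})ᶜ, w' i * Real.log (C * ζ i)
      + ∑ i ∈ A ∪ {i₀}, w' i * Real.log (ζ i * ∑ j, τ i j * w j)
    < -Real.log (∑ i, ζ i * w i)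
      + ∑ i ∈ Aᶜ, w' i * Real.log (C * ζ i)
      + ∑ i ∈ A, w' i * Real.log (ζ i * ∑ j, τ i j * w j) := by
  have hS : 0 < ∑ j, τ i₀ j * w j :=
    sum_mul_pos_of_pos_of_sum_pos (fun j _ => hτ i₀ j) (fun j _ => hw j) (by simp [hwsum])
  have hkey : w' i₀ * Real.log (ζ i₀ * ∑ j, τ i₀ j * w j) < w' i₀ * Real.log (C * ζ i₀) := by
    refine mul_lt_mul_of_pos_left (Real.log_lt_log (mul_pos (hζ i₀) hS) ?_) hwi₀
    rw [mul_comm C]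
    exact mul_lt_mul_of_pos_left hlt (hζ i₀)
  rw [union_singleton, add_assoc, add_assoc]
  exact add_lt_add_right (sum_compl_insert_add_sum_insert_lt _ _ hi₀ hkey) _

/-- Strict tightening of the simplification upper bound when adding an index
`i₀ ∉ A` with `w' i₀ > 0` and `∑ j, τ i₀ j * w j < C`:
`u(A ∪ {i₀}) < u(A)`. -/
theorem simplification_upper_bound_strict_tightening
    (m : ℕ) (hm : 1 ≤ m) (C : ℝ) (hC : 0 < C)
    (w w' ζ : Fin m → ℝ) (τ : Fin m → Fin m → ℝ)
    (hw : ∀ j, 0 ≤ w j) (hw' : ∀ i, 0 ≤ w' i)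
    (hwsum : ∑ j, w j = 1) (hw'sum : ∑ i, w' i = 1)
    (hζ : ∀ i, 0 < ζ i)
    (hτ : ∀ i j, 0 < τ i j) (hτC : ∀ i j, τ i j ≤ C)
    (A : Finset (Fin m)) (i₀ : Fin m) (hi₀ : i₀ ∉ A)
    (hwi₀ : 0 < w' i₀) (hlt : ∑ j, τ i₀ j * w j < C) :
    -Real.log (∑ i, ζ i * w i)
      + ∑ i ∈ (A ∪ {i₀})ᶜ, w' i * Real.log (C * ζ i)
      + ∑ i ∈ A ∪ {i₀}, w' i * Real.log (ζ i * ∑ j, τ i j * w j)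
    < -Real.log (∑ i, ζ i * w i)
      + ∑ i ∈ Aᶜ, w' i * Real.log (C * ζ i)
      + ∑ i ∈ A, w' i * Real.log (ζ i * ∑ j, τ i j * w j) :=
  simplification_upper_bound_strict_tightening_general m C w w' ζ τ hw hwsum hζ hτ A i₀ hi₀ hwi₀ hlt
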